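/- Let F be a free group of rank n ≥ 2 with free generating set X, and let d be a positive integer divisible by 4. Then there exists a distinct difference configuration in F of diameter at most d and cardinality 2n(2n−1)^{d/4−1}. -/

import Mathlib

/-!
For reduced words `w ≠ u` of the same length `k`, write `w = p a s` and `u = p b t` with letters
`a ≠ b`. Then `(w·rev w)⁻¹ (u·rev u) = (rev w)⁻¹ · s⁻¹ a⁻¹ · b t · rev u`, and this word is already
reduced, since the only junction where cancellation could occur is `a⁻¹ b`. Hence the reduced word
of the quotient starts with `(rev w)⁻¹` and ends with `rev u`, so it determines the pair `(w, u)`,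
and the palindromes `w·rev w` form a distinct difference configuration. They have length `2k`, so
all quotients have length at most `4k`, and there are `2n(2n-1)^(k-1)` reduced words of length `k`.
-/

/-- A subset `D` of a group is a distinct difference configuration. -/
def IsDDC {G : Type*} [Group G] (D : Set G) : Prop :=
  ∀ g ∈ D, ∀ h ∈ D, ∀ g' ∈ D, ∀ h' ∈ D,
    g ≠ h → g' ≠ h' → g⁻¹ * h = g'⁻¹ * h' → g = g' ∧ h = h'

theorem isDDC_image {G ι : Type*} [Group G] {f : ι → G} {S : Set ι}
    (h : ∀ x ∈ S, ∀ y ∈ S, ∀ x' ∈ S, ∀ y' ∈ S,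
      x ≠ y → x' ≠ y' → (f x)⁻¹ * f y = (f x')⁻¹ * f y' → x = x' ∧ y = y') :
    IsDDC (f '' S) := by
  rintro _ ⟨x, hx, rfl⟩ _ ⟨y, hy, rfl⟩ _ ⟨x', hx', rfl⟩ _ ⟨y', hy', rfl⟩ hxy hxy' heq
  obtain ⟨rfl, rfl⟩ := h x hx y hy x' hx' y' hy' (ne_of_apply_ne f hxy) (ne_of_apply_ne f hxy') heq
  exact ⟨rfl, rfl⟩

theorem List.exists_eq_append_cons_of_ne {β : Type*} :
    ∀ {l₁ l₂ : List β}, l₁.length = l₂.length → l₁ ≠ l₂ →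
      ∃ p a b s t, l₁ = p ++ a :: s ∧ l₂ = p ++ b :: t ∧ a ≠ b
  | [], [], _, hne => absurd rfl hne
  | a :: s, b :: t, hl, hne => by
    by_cases hab : a = b
    · subst hab
      obtain ⟨p, a', b', s', t', rfl, rfl, hab'⟩ :=
        exists_eq_append_cons_of_ne (by simpa using hl) fun h => hne (by rw [h])
      exact ⟨a :: p, a', b', s', t', rfl, rfl, hab'⟩
    · exact ⟨[], a, b, s, t, rfl, rfl, hab⟩

namespace FreeGroup

open List

variable {α : Type*} {L L₁ L₂ : List (α × Bool)}

theorem IsReduced.reverse (h : IsReduced L) : IsReduced L.reverse :=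
  isChain_reverse.mpr (h.imp fun _ _ hab heq => (hab heq.symm).symm)

theorem IsReduced.invRev (h : IsReduced L) : IsReduced (invRev L) := by
  refine IsReduced.reverse ((isChain_map _).mpr (h.imp fun _ _ hab heq => ?_))
  simpa using hab heq

theorem head?_invRev : (invRev L).head? = L.getLast?.map fun g => (g.1, !g.2) := by
  simp [invRev, head?_reverse, getLast?_map]

theorem getLast?_invRev : (invRev L).getLast? = L.head?.map fun g => (g.1, !g.2) := by
  simp [invRev, getLast?_reverse, head?_map]

theorem IsReduced.append_of_getLast?_eq_head? (h₁ : IsReduced L₁) (h₂ : IsReduced L₂)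
    (h : L₁.getLast? = L₂.head?) : IsReduced (L₁ ++ L₂) :=
  isChain_append.mpr ⟨h₁, h₂, fun x hx y hy _ => by simp_all⟩

theorem IsReduced.append_reverse (h : IsReduced L) : IsReduced (L ++ L.reverse) :=
  h.append_of_getLast?_eq_head? h.reverse (head?_reverse ..).symm

theorem isReduced_invRev_cons_append_cons {a b : α × Bool} {s t : List (α × Bool)}
    (hs : IsReduced (a :: s)) (ht : IsReduced (b :: t)) (hab : a ≠ b) :
    IsReduced (invRev (a :: s) ++ b :: t) := by
  refine isChain_append.mpr ⟨hs.invRev, ht, fun x hx y hy heq => ?_⟩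
  simp only [invRev, getLast?_append, map_cons, reverse_cons,
    getLast?_singleton, Option.some_or, Option.mem_def, Option.some.injEq,
    head?_cons] at hx hy
  subst hx hy
  obtain ⟨a₁, a₂⟩ := a; obtain ⟨b₁, b₂⟩ := b
  cases a₂ <;> cases b₂ <;> simp_all

section Palindrome

variable {w u : List (α × Bool)}

def palindrome (w : List (α × Bool)) : FreeGroup α := mk (w ++ w.reverse)

variable [DecidableEq α]

theorem toWord_palindrome (hw : IsReduced w) : (palindrome w).toWord = w ++ w.reverse := by
  rw [palindrome, toWord_mk, hw.append_reverse.reduce_eq]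

theorem palindrome_injOn : Set.InjOn palindrome {w : List (α × Bool) | IsReduced w} := by
  intro w hw u hu h
  have h' := toWord_palindrome hw ▸ toWord_palindrome hu ▸ congrArg toWord h
  have hlength := congrArg length h'
  simp only [length_append, length_reverse] at hlength
  exact (append_inj h' (by omega)).1

theorem norm_palindrome_le (w : List (α × Bool)) : (palindrome w).norm ≤ 2 * w.length :=
  norm_mk_le.trans (by simp [two_mul])

theorem exists_toWord_inv_palindrome_mul_palindrome (hw : IsReduced w) (hu : IsReduced u)
    (hl : w.length = u.length) (hne : w ≠ u) :
    ∃ m, ((palindrome w)⁻¹ * palindrome u).toWord = invRev w.reverse ++ m ++ u.reverse := by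
  obtain ⟨p, a, b, s, t, hwp, hup, hab⟩ := exists_eq_append_cons_of_ne hl hne
  refine ⟨invRev (a :: s) ++ b :: t, ?_⟩
  have hgroup : (palindrome w)⁻¹ * palindrome u =
      mk (invRev w.reverse ++ (invRev (a :: s) ++ b :: t) ++ u.reverse) := by
    subst hwp hup
    simp only [palindrome, ← mul_mk, ← inv_mk, mul_inv_rev]
    group
  have hreduced : IsReduced (invRev w.reverse ++ (invRev (a :: s) ++ b :: t) ++ u.reverse) := by
    have has : IsReduced (a :: s) := hw.infix (hwp ▸ (suffix_append p _).isInfix)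
    have hbt : IsReduced (b :: t) := hu.infix (hup ▸ (suffix_append p _).isInfix)
    refine (hw.reverse.invRev.append_of_getLast?_eq_head?
      (isReduced_invRev_cons_append_cons has hbt hab) ?_).append_of_getLast?_eq_head? hu.reverse ?_
    · rw [getLast?_invRev, head?_append, head?_invRev, head?_reverse, hwp,
        getLast?_append_of_ne_nil _ (cons_ne_nil a s), getLast?_eq_some_getLast (cons_ne_nil a s)]
      rfl
    · rw [head?_reverse, hup, getLast?_append_of_ne_nil _ (cons_ne_nil b t),
        getLast?_append_of_ne_nil _ (append_ne_nil_of_right_ne_nil _ (cons_ne_nil b t)),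
        getLast?_append_of_ne_nil _ (cons_ne_nil b t)]
  rw [hgroup, toWord_mk, hreduced.reduce_eq]

theorem norm_inv_palindrome_mul_palindrome_le (w u : List (α × Bool)) :
    ((palindrome w)⁻¹ * palindrome u).norm ≤ 2 * w.length + 2 * u.length :=
  calc ((palindrome w)⁻¹ * palindrome u).norm ≤ (palindrome w)⁻¹.norm + (palindrome u).norm :=
        norm_mul_le _ _
    _ ≤ 2 * w.length + 2 * u.length := by
        rw [norm_inv_eq]; exact add_le_add (norm_palindrome_le w) (norm_palindrome_le u)

theorem isDDC_image_palindrome {S : Set (List (α × Bool))} {k : ℕ}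
    (hS : ∀ w ∈ S, IsReduced w ∧ w.length = k) : IsDDC (palindrome '' S) := by
  refine isDDC_image fun w hw u hu w' hw' u' hu' hwu hwu' heq => ?_
  obtain ⟨hwr, hwk⟩ := hS w hw
  obtain ⟨hur, huk⟩ := hS u hu
  obtain ⟨hwr', hwk'⟩ := hS w' hw'
  obtain ⟨hur', huk'⟩ := hS u' hu'
  obtain ⟨m, hm⟩ := exists_toWord_inv_palindrome_mul_palindrome hwr hur (hwk.trans huk.symm) hwu
  obtain ⟨m', hm'⟩ :=
    exists_toWord_inv_palindrome_mul_palindrome hwr' hur' (hwk'.trans huk'.symm) hwu'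
  have hword : invRev w.reverse ++ m ++ u.reverse = invRev w'.reverse ++ m' ++ u'.reverse := by
    rw [← hm, ← hm', heq]
  have hprefix := (append_inj (by simpa only [append_assoc] using hword) (by simp [hwk, hwk'])).1
  have hsuffix := (append_inj' hword (by simp [huk, huk'])).2
  exact ⟨reverse_injective (invRev_injective hprefix), reverse_injective hsuffix⟩

end Palindrome

section Counting

open Finset

variable [DecidableEq α] [Fintype α]

instance : DecidablePred (IsReduced (α := α)) := fun L => inferInstanceAs (Decidable (L.IsChain _))

def reducedWords : ℕ → Finset (List (α × Bool))
  | 0 => {[]}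
  | k + 1 =>
    (reducedWords k).biUnion fun L => (univ.filter fun x => IsReduced (x :: L)).image (· :: L)

theorem mem_reducedWords {k : ℕ} : L ∈ reducedWords k ↔ IsReduced L ∧ L.length = k := by
  induction k generalizing L with
  | zero =>
    simp only [reducedWords, Finset.mem_singleton, length_eq_zero_iff, iff_and_self]
    rintro rfl
    exact IsReduced.nil
  | succ k ih =>
    simp only [reducedWords, mem_biUnion, mem_image, Finset.mem_filter, mem_univ, true_and, ih]
    constructor
    · rintro ⟨L, ⟨-, rfl⟩, x, hx, rfl⟩
      exact ⟨hx, rfl⟩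
    · rintro ⟨hL, hk⟩
      obtain ⟨x, L, rfl⟩ := exists_cons_of_length_eq_add_one hk
      exact ⟨L, ⟨hL.infix (suffix_cons x L).isInfix, by simpa using hk⟩, x, hL, rfl⟩

theorem card_reducedWords_succ_eq_sum (k : ℕ) :
    #(reducedWords (α := α) (k + 1)) =
      ∑ L ∈ reducedWords k, #(univ.filter fun x : α × Bool => IsReduced (x :: L)) := by
  rw [reducedWords, card_biUnion]
  · exact sum_congr rfl fun L _ => card_image_of_injective _ fun _ _ h => (cons_eq_cons.mp h).1
  · intro L₁ _ L₂ _ hne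
    simp only [Finset.disjoint_left, mem_image]
    rintro _ ⟨x, -, rfl⟩ ⟨y, -, h⟩
    exact hne (cons_eq_cons.mp h).2.symm

theorem card_filter_isReduced_singleton :
    #(univ.filter fun x : α × Bool => IsReduced [x]) = 2 * Fintype.card α := by
  simp [IsReduced.singleton, mul_comm]

theorem card_filter_isReduced_cons_cons {y : α × Bool} (hL : IsReduced (y :: L)) :
    #(univ.filter fun x => IsReduced (x :: y :: L)) = 2 * Fintype.card α - 1 := by
  have : univ.filter (fun x => IsReduced (x :: y :: L)) = univ.erase (y.1, !y.2) := by
    ext ⟨x₁, x₂⟩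
    obtain ⟨y₁, y₂⟩ := y
    cases x₂ <;> cases y₂ <;> simp [isReduced_cons_cons, hL]
  rw [this, card_erase_of_mem (mem_univ _), card_univ, Fintype.card_prod, Fintype.card_bool,
    mul_comm]

theorem card_reducedWords_succ (k : ℕ) :
    #(reducedWords (α := α) (k + 1)) = 2 * Fintype.card α * (2 * Fintype.card α - 1) ^ k := by
  induction k with
  | zero =>
    rw [card_reducedWords_succ_eq_sum, reducedWords, Finset.sum_singleton,
      card_filter_isReduced_singleton, pow_zero, mul_one]
  | succ k ih =>
    rw [card_reducedWords_succ_eq_sum, sum_congr rfl fun L hL => ?_, sum_const, smul_eq_mul, ih,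
      pow_succ, mul_assoc]
    obtain ⟨hL, hk⟩ := mem_reducedWords.mp hL
    obtain ⟨y, L, rfl⟩ := exists_cons_of_length_eq_add_one hk
    exact card_filter_isReduced_cons_cons hL

end Counting

end FreeGroup

open FreeGroup in
theorem stmt7_general (α : Type*) [Fintype α] [DecidableEq α] (n : ℕ)
    (hcard : Fintype.card α = n) (d : ℕ) (hd : 0 < d) (hd4 : 4 ∣ d) :
    ∃ D : Set (FreeGroup α), IsDDC D ∧
      (∀ g ∈ D, ∀ h ∈ D, (g⁻¹ * h).norm ≤ d) ∧
      D.ncard = 2 * n * (2 * n - 1) ^ (d / 4 - 1) := by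
  obtain ⟨k, rfl⟩ := hd4
  obtain ⟨j, rfl⟩ : ∃ j, k = j + 1 := ⟨k - 1, by omega⟩
  have hwords (w : List (α × Bool)) (hw : w ∈ reducedWords (α := α) (j + 1)) :
      IsReduced w ∧ w.length = j + 1 :=
    mem_reducedWords.mp hw
  refine ⟨palindrome '' ↑(reducedWords (α := α) (j + 1)), isDDC_image_palindrome hwords, ?_, ?_⟩
  · rintro _ ⟨w, hw, rfl⟩ _ ⟨u, hu, rfl⟩
    have := norm_inv_palindrome_mul_palindrome_le w u
    rw [(hwords w hw).2, (hwords u hu).2] at this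
    omega
  · rw [(palindrome_injOn.mono fun w hw => (hwords w hw).1).ncard_image,
      Set.ncard_coe_finset, card_reducedWords_succ, hcard]
    simp

theorem stmt7 (α : Type*) [Fintype α] [DecidableEq α] (n : ℕ) (hn : 2 ≤ n)
    (hcard : Fintype.card α = n) (d : ℕ) (hd : 0 < d) (hd4 : 4 ∣ d) :
    ∃ D : Set (FreeGroup α), IsDDC D ∧
      (∀ g ∈ D, ∀ h ∈ D, (g⁻¹ * h).norm ≤ d) ∧
      D.ncard = 2 * n * (2 * n - 1) ^ (d / 4 - 1) :=
  stmt7_general α n hcard d hd hd4
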